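/- Let ξ₁ ∈ S₁ and ξ₂ ∈ S₃ be complex numbers, and let t ∈ [−1,1] be real. Then there exists k ∈ {−1, 0, 1} such that | |ξ₁−i|² + |ξ₂−1|² + i(t + 2k − 2·Re ξ₁ + 2·Im ξ₂) | ≤ 2. Hence the region Σ₃ is covered by the closed regions bounded by the Heisenberg sphere of radius √2 centered at ((i,1)ᵀ,0) together with its vertical translates by ±2. -/

import Mathlib

open Complex

/-- The closed triangle with vertices `i, i/2, (1+i)/2`. -/
def triS₁ : Set ℂ := {z : ℂ | 0 ≤ z.re ∧ 1/2 ≤ z.im ∧ z.re + z.im ≤ 1}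

/-- The closed triangle with vertices `0, 1, (1+i)/2`. -/
def triS₃ : Set ℂ := {z : ℂ | 0 ≤ z.im ∧ z.im ≤ z.re ∧ z.re + z.im ≤ 1}

/-!
On `S₁` the squared distance to `i` is at most `1/2`, and on `S₃` the squared distance to `1`
is at most `1`; both are convex functions, so these bounds are their values at the vertices.
The imaginary part `t - 2 Re ξ₁ + 2 Im ξ₂` lies in `[-2, 2]`, so a shift by `2k` with
`k ∈ {-1, 0, 1}` brings it into `[-1, 1]`. The point then has modulus at most
`√((3/2)² + 1) < 2`.
-/

lemma norm_sub_I_sq_le_of_mem_triS₁ {z : ℂ} (hz : z ∈ triS₁) : ‖z - I‖ ^ 2 ≤ 1 / 2 := by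
  obtain ⟨hre, him, hsum⟩ := hz
  rw [← normSq_eq_norm_sq, normSq_apply]
  simp only [sub_re, sub_im, I_re, I_im]
  nlinarith

lemma norm_sub_one_sq_le_of_mem_triS₃ {z : ℂ} (hz : z ∈ triS₃) : ‖z - 1‖ ^ 2 ≤ 1 := by
  obtain ⟨him, hle, hsum⟩ := hz
  rw [← normSq_eq_norm_sq, normSq_apply]
  simp only [sub_re, sub_im, one_re, one_im]
  nlinarith

lemma exists_abs_add_two_mul_le_one {s : ℝ} (hs : |s| ≤ 2) :
    ∃ k : ℤ, (k = -1 ∨ k = 0 ∨ k = 1) ∧ |s + 2 * k| ≤ 1 := by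
  obtain ⟨hs₁, hs₂⟩ := abs_le.mp hs
  rcases le_or_gt s (-1) with h | h
  · exact ⟨1, by simp, abs_le.mpr ⟨by push_cast; linarith, by push_cast; linarith⟩⟩
  rcases le_or_gt s 1 with h' | h'
  · exact ⟨0, by simp, by simpa using abs_le.mpr ⟨h.le, h'⟩⟩
  · exact ⟨-1, by simp, abs_le.mpr ⟨by push_cast; linarith, by push_cast; linarith⟩⟩

lemma norm_ofReal_add_I_mul_le {a c r : ℝ} (hr : 0 ≤ r) (h : a ^ 2 + c ^ 2 ≤ r ^ 2) :
    ‖(a : ℂ) + I * c‖ ≤ r := by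
  rw [mul_comm, norm_add_mul_I]
  exact Real.sqrt_le_iff.mpr ⟨hr, h⟩

/-- The region `Σ₃` is covered by the closed regions bounded by the Heisenberg
sphere of radius `√2` centered at `((i,1)ᵀ,0)` together with its vertical
translates by `±2`. -/
theorem sigma_three_covered
    (ξ₁ ξ₂ : ℂ) (hξ₁ : ξ₁ ∈ triS₁) (hξ₂ : ξ₂ ∈ triS₃)
    (t : ℝ) (ht : -1 ≤ t ∧ t ≤ 1) :
    ∃ k : ℤ, (k = -1 ∨ k = 0 ∨ k = 1) ∧
      ‖(‖ξ₁ - Complex.I‖ : ℂ) ^ 2 +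
        (‖ξ₂ - 1‖ : ℂ) ^ 2 +
        Complex.I * ((t + 2 * k - 2 * ξ₁.re + 2 * ξ₂.im : ℝ) : ℂ)‖ ≤ 2 := by
  have hd₁ := norm_sub_I_sq_le_of_mem_triS₁ hξ₁
  have hd₂ := norm_sub_one_sq_le_of_mem_triS₃ hξ₂
  obtain ⟨ht₁, ht₂⟩ := ht
  have hs : |t - 2 * ξ₁.re + 2 * ξ₂.im| ≤ 2 := by
    obtain ⟨h₁, h₁', h₁''⟩ := hξ₁
    obtain ⟨h₂, h₂', h₂''⟩ := hξ₂
    exact abs_le.mpr ⟨by linarith, by linarith⟩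
  obtain ⟨k, hk, hshift⟩ := exists_abs_add_two_mul_le_one hs
  refine ⟨k, hk, ?_⟩
  rw [← ofReal_pow, ← ofReal_pow, ← ofReal_add]
  refine norm_ofReal_add_I_mul_le zero_le_two ?_
  have hc : (t + 2 * k - 2 * ξ₁.re + 2 * ξ₂.im : ℝ) ^ 2 ≤ 1 := by
    obtain ⟨hlo, hhi⟩ := abs_le.mp hshift
    rw [sq_le_one_iff_abs_le_one, abs_le]
    constructor <;> linarith
  nlinarith [sq_nonneg (‖ξ₁ - I‖ ^ 2 + ‖ξ₂ - 1‖ ^ 2), sq_nonneg ‖ξ₁ - I‖, sq_nonneg ‖ξ₂ - 1‖]
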